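/- For natural numbers k and d with 0 ≤ k ≤ d and d ≥ 1, the number of degrees of freedom d·k + d − k(k−1)/2 of the covariance structure Σ = AA' + Ψ of a k-factor model does not exceed the number d(d+1)/2 of degrees of freedom of a full d×d covariance matrix if and only if (as real numbers) k ≤ d + (1 − √(1+8d))/2. -/
import Mathlib

/-- For natural numbers `k` and `d` with `0 ≤ k ≤ d` and `d ≥ 1`, the number
of degrees of freedom `d·k + d − k(k−1)/2` of the covariance structure `Σ = AA' + Ψ` of a
`k`-factor model does not exceed the number `d(d+1)/2` of degrees of freedom of a full
`d×d` covariance matrix if and only if (as real numbers)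
`k ≤ d + (1 − √(1+8d))/2`. -/
theorem factor_model_dof_le_iff (d k : ℕ) (hd : 1 ≤ d) (hkd : k ≤ d) :
    ((d : ℝ) * k + d - k * (k - 1) / 2 ≤ d * (d + 1) / 2) ↔
      (k : ℝ) ≤ d + (1 - Real.sqrt (1 + 8 * d)) / 2 := by
  have hkd' : (k : ℝ) ≤ d := by exact_mod_cast hkd
  set s := Real.sqrt (1 + 8 * d) with hsdef
  have hnn : (0:ℝ) ≤ 1 + 8 * d := by positivity
  have hs2 : s ^ 2 = 1 + 8 * d := Real.sq_sqrt hnn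
  have hs0 : 0 ≤ s := Real.sqrt_nonneg _
  constructor
  · intro h
    nlinarith [sq_nonneg (s - (2 * ((d:ℝ) - k) + 1)), sq_nonneg (s + (2 * ((d:ℝ) - k) + 1))]
  · intro h
    nlinarith [sq_nonneg s, hs0, mul_self_nonneg (s - 1)]
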